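/- Let P and Q be d×d real orthogonal projection matrices. Then there exists an orthogonal matrix U such that Uᵀ P U and Uᵀ Q U are simultaneously block-diagonal, where each block is either 1×1 (with P and Q each having entry 0 or 1) or 2×2 of the form P-block (1/2)[[1-c,-s],[-s,1+c]] and Q-block (1/2)[[1-c,s],[s,1+c]] for some c ∈ (-1,1), s = sqrt(1-c²). (CS decomposition for a pair of projections.) -/

import Mathlib

open Matrix

noncomputable def Pblock (c : ℝ) : Matrix (Fin 2) (Fin 2) ℝ :=
  !![(1 - c) / 2, -Real.sqrt (1 - c ^ 2) / 2; -Real.sqrt (1 - c ^ 2) / 2, (1 + c) / 2]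

noncomputable def Qblock (c : ℝ) : Matrix (Fin 2) (Fin 2) ℝ :=
  !![(1 - c) / 2, Real.sqrt (1 - c ^ 2) / 2; Real.sqrt (1 - c ^ 2) / 2, (1 + c) / 2]

/-!
Induction on the dimension. It suffices to find a nonzero subspace `W` invariant under both
projections `p` and `q` on which they already have the required form: `Wᗮ` is then invariant
as well, since `p` and `q` are symmetric, and the induction hypothesis applies to it.

If `p` and `q` have a common unit eigenvector, `W` is its span. Otherwise take a unit eigenvector
`x` of `p q p` inside the range of `p`, put `γ = ‖q x‖ ∈ (0, 1)` and `y = γ⁻¹ q x`. Then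
`⟪x, y⟫ = γ`, `p y = γ x` and `q x = γ y`, so the plane `W` spanned by `x` and `y` is invariant
and `p`, `q` act on it as the rank-one projections onto `x` and `y`. In the orthonormal frame of
`W` bisecting `x` and `y` these are exactly `Pblock (-γ)` and `Qblock (-γ)`.
-/

namespace Matrix

variable {R m ι₁ ι₂ κ₁ κ₂ : Type*} [Zero R] [DecidableEq ι₁] [DecidableEq ι₂]
  [DecidableEq κ₁] [DecidableEq κ₂]

def diagonalSumBlockDiagonal (a : ι₁ → R) (B : ι₂ → Matrix m m R) :
    Matrix (ι₁ ⊕ m × ι₂) (ι₁ ⊕ m × ι₂) R :=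
  fromBlocks (diagonal a) 0 0 (blockDiagonal B)

theorem reindex_diagonalSumBlockDiagonal (e₁ : ι₁ ≃ κ₁) (e₂ : ι₂ ≃ κ₂) (a : ι₁ → R)
    (B : ι₂ → Matrix m m R) :
    reindex (e₁.sumCongr ((Equiv.refl m).prodCongr e₂))
        (e₁.sumCongr ((Equiv.refl m).prodCongr e₂)) (diagonalSumBlockDiagonal a B) =
      diagonalSumBlockDiagonal (a ∘ e₁.symm) (B ∘ e₂.symm) := by
  ext (i | ⟨k, i⟩) (j | ⟨l, j⟩) <;>
    simp [diagonalSumBlockDiagonal, diagonal_apply, blockDiagonal_apply]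

def sumBlocksEquiv (m ι₁ ι₂ κ₁ κ₂ : Type*) :
    (ι₁ ⊕ m × ι₂) ⊕ (κ₁ ⊕ m × κ₂) ≃ (ι₁ ⊕ κ₁) ⊕ m × (ι₂ ⊕ κ₂) :=
  (Equiv.sumSumSumComm _ _ _ _).trans
    (Equiv.sumCongr (Equiv.refl _) (Equiv.prodSumDistrib m ι₂ κ₂).symm)

theorem reindex_fromBlocks_diagonalSumBlockDiagonal (a : ι₁ → R) (B : ι₂ → Matrix m m R)
    (a' : κ₁ → R) (B' : κ₂ → Matrix m m R) :
    reindex (sumBlocksEquiv m ι₁ ι₂ κ₁ κ₂) (sumBlocksEquiv m ι₁ ι₂ κ₁ κ₂)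
        (fromBlocks (diagonalSumBlockDiagonal a B) 0 0 (diagonalSumBlockDiagonal a' B')) =
      diagonalSumBlockDiagonal (Sum.elim a a') (Sum.elim B B') := by
  ext ((i | i) | ⟨k, i | i⟩) ((j | j) | ⟨l, j | j⟩) <;>
    simp [sumBlocksEquiv, diagonalSumBlockDiagonal, diagonal_apply, blockDiagonal_apply]

theorem isSymmetricProjection_toEuclideanLin {n : Type*} [Fintype n] [DecidableEq n]
    {A : Matrix n n ℝ} (hA : Aᵀ = A) (hAA : A * A = A) :
    (toEuclideanLin A).IsSymmetricProjection :=
  have hA' : IsStarProjection A :=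
    ⟨hAA, by rw [IsSelfAdjoint, star_eq_conjTranspose, conjTranspose_eq_transpose_of_trivial, hA]⟩
  LinearMap.isStarProjection_iff_isSymmetricProjection.mp
    (hA'.map (LinearMap.toMatrixOrthonormal (EuclideanSpace.basisFun n ℝ)).symm)

theorem transpose_mul_mul_eq_toMatrixOrthonormal {n : Type*} [Fintype n] [DecidableEq n]
    (b : OrthonormalBasis n ℝ (EuclideanSpace ℝ n)) (A : Matrix n n ℝ) :
    ((EuclideanSpace.basisFun n ℝ).toBasis.toMatrix b)ᵀ * A *
        (EuclideanSpace.basisFun n ℝ).toBasis.toMatrix b =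
      LinearMap.toMatrixOrthonormal b (toEuclideanLin A) := by
  set e := EuclideanSpace.basisFun n ℝ
  have hU : (e.toBasis.toMatrix b)ᵀ = b.toBasis.toMatrix e.toBasis := by
    ext i j
    simp only [Module.Basis.toMatrix_apply, transpose_apply, OrthonormalBasis.coe_toBasis,
      OrthonormalBasis.coe_toBasis_repr_apply, OrthonormalBasis.repr_apply_apply, real_inner_comm]
  have hA : LinearMap.toMatrix e.toBasis e.toBasis (toEuclideanLin A) = A :=
    (LinearMap.toMatrixOrthonormal e).apply_symm_apply A
  have := basis_toMatrix_mul_linearMap_toMatrix_mul_basis_toMatrix (b := b.toBasis)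
    (c := b.toBasis) (b' := e.toBasis) (c' := e.toBasis) (toEuclideanLin A)
  rwa [hA, ← hU] at this

end Matrix

theorem sqrt_one_sub_sq_sub_sq {α β : ℝ} (hα : 0 ≤ α) (hβ : 0 ≤ β) (hαβ : α ^ 2 + β ^ 2 = 1) :
    √(1 - (β ^ 2 - α ^ 2) ^ 2) = 2 * α * β := by
  rw [Real.sqrt_eq_iff_mul_self_eq (by nlinarith) (by positivity)]
  linear_combination -(1 + α ^ 2 + β ^ 2) * hαβ

theorem Pblock_eq_vecMulVec {α β : ℝ} (hα : 0 ≤ α) (hβ : 0 ≤ β) (hαβ : α ^ 2 + β ^ 2 = 1) :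
    Pblock (β ^ 2 - α ^ 2) = vecMulVec ![α, -β] ![α, -β] := by
  ext i j
  fin_cases i <;> fin_cases j <;>
    simp [Pblock, vecMulVec, sqrt_one_sub_sq_sub_sq hα hβ hαβ] <;> linarith

theorem Qblock_eq_vecMulVec {α β : ℝ} (hα : 0 ≤ α) (hβ : 0 ≤ β) (hαβ : α ^ 2 + β ^ 2 = 1) :
    Qblock (β ^ 2 - α ^ 2) = vecMulVec ![α, β] ![α, β] := by
  ext i j
  fin_cases i <;> fin_cases j <;>
    simp [Qblock, vecMulVec, sqrt_one_sub_sq_sub_sq hα hβ hαβ] <;> linarith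

open Module Submodule LinearMap
open scoped RealInnerProductSpace

theorem IsIdempotentElem.eq_zero_or_eq_one_of_apply_eq_smul {K M : Type*} [Field K]
    [AddCommGroup M] [Module K M] {p : Module.End K M} (hp : IsIdempotentElem p) {x : M} {μ : K}
    (hx : x ≠ 0) (h : p x = μ • x) : μ = 0 ∨ μ = 1 := by
  have : (μ * (μ - 1)) • x = 0 := by
    rw [mul_sub, mul_one, sub_smul, mul_smul, ← h, ← map_smul, ← h, ← Module.End.mul_apply,
      hp.eq, sub_self]
  rcases smul_eq_zero.mp this with h' | h'
  · exact (mul_eq_zero.mp h').imp_right sub_eq_zero.mp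
  · exact absurd h' hx

theorem LinearMap.IsSymmetricProjection.restrict {𝕜 E : Type*} [RCLike 𝕜]
    [NormedAddCommGroup E] [InnerProductSpace 𝕜 E] {p : Module.End 𝕜 E}
    (hp : p.IsSymmetricProjection) {W : Submodule 𝕜 E} (hW : ∀ x ∈ W, p x ∈ W) :
    (p.restrict hW).IsSymmetricProjection where
  isIdempotentElem := LinearMap.ext fun x => Subtype.ext <| by
    simp only [Module.End.mul_apply, coe_restrict_apply]
    exact congr($(hp.isIdempotentElem.eq) x)
  isSymmetric := hp.isSymmetric.restrict_invariant hW

variable {E : Type*} [NormedAddCommGroup E] [InnerProductSpace ℝ E]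

theorem LinearMap.IsSymmetric.exists_norm_eq_one_apply_eq_smul [FiniteDimensional ℝ E]
    [Nontrivial E] {T : Module.End ℝ E} (hT : T.IsSymmetric) :
    ∃ x : E, ‖x‖ = 1 ∧ ∃ μ : ℝ, T x = μ • x := by
  obtain ⟨μ, hμ⟩ : ∃ μ : ℝ, T.HasEigenvalue μ :=
    ⟨_, hT.hasEigenvalue_iSup_of_finiteDimensional⟩
  obtain ⟨x, hx⟩ := hμ.exists_hasEigenvector
  refine ⟨‖x‖⁻¹ • x, norm_smul_inv_norm hx.2, μ, ?_⟩
  rw [map_smul, Module.End.mem_eigenspace_iff.mp hx.1, smul_comm]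

theorem toMatrixOrthonormal_prod_orthogonalDecomposition [FiniteDimensional ℝ E]
    {ι κ : Type*} [Fintype ι] [DecidableEq ι] [Fintype κ] [DecidableEq κ] {W : Submodule ℝ E}
    (b₁ : OrthonormalBasis ι ℝ W) (b₂ : OrthonormalBasis κ ℝ Wᗮ) (f : Module.End ℝ E)
    (hW : ∀ x ∈ W, f x ∈ W) (hW' : ∀ x ∈ Wᗮ, f x ∈ Wᗮ) :
    toMatrixOrthonormal ((b₁.prod b₂).map W.orthogonalDecomposition.symm) f =
      fromBlocks (toMatrixOrthonormal b₁ (f.restrict hW)) 0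
        0 (toMatrixOrthonormal b₂ (f.restrict hW')) := by
  ext (i | i) (j | j) <;>
    simp only [toMatrixOrthonormal_apply_apply, OrthonormalBasis.map_apply,
      OrthonormalBasis.prod_apply, Sum.elim_inl, Sum.elim_inr, Function.comp_apply,
      orthogonalDecomposition_symm_apply, coe_inl, coe_inr, WithLp.toLp_fst, WithLp.toLp_snd,
      ZeroMemClass.coe_zero, add_zero, zero_add, fromBlocks_apply₁₁, fromBlocks_apply₁₂,
      fromBlocks_apply₂₁, fromBlocks_apply₂₂, Matrix.zero_apply, coe_inner, coe_restrict_apply]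
  · exact inner_right_of_mem_orthogonal (b₁ i).2 (hW' _ (b₂ j).2)
  · exact inner_left_of_mem_orthogonal (hW _ (b₁ j).2) (b₂ i).2

section SpanOfOrthonormal

variable {ι : Type*} [Fintype ι] {v : ι → E}

theorem apply_mem_span_range_of_apply_eq_sum (f : Module.End ℝ E) (M : Matrix ι ι ℝ)
    (h : ∀ j, f (v j) = ∑ i, M i j • v i) :
    ∀ x ∈ span ℝ (Set.range v), f x ∈ span ℝ (Set.range v) := by
  have : span ℝ (Set.range v) ≤ (span ℝ (Set.range v)).comap f :=
    span_le.mpr <| Set.range_subset_iff.mpr fun j => by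
      rw [SetLike.mem_coe, mem_comap, h j]
      exact sum_mem fun i _ => smul_mem _ _ (subset_span (Set.mem_range_self i))
  exact fun x hx => this hx

noncomputable def Orthonormal.orthonormalBasisSpan (hv : Orthonormal ℝ v) :
    OrthonormalBasis ι ℝ (span ℝ (Set.range v)) :=
  (Basis.span hv.linearIndependent).toOrthonormalBasis <| by
    simpa [Function.comp_def] using (span ℝ (Set.range v)).subtypeₗᵢ.orthonormal_comp_iff.mp
      (by simpa [Function.comp_def] using hv)

@[simp]
theorem Orthonormal.coe_orthonormalBasisSpan (hv : Orthonormal ℝ v) (i : ι) :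
    (hv.orthonormalBasisSpan i : E) = v i := by
  simp [Orthonormal.orthonormalBasisSpan]

theorem Orthonormal.toMatrixOrthonormal_restrict_span [FiniteDimensional ℝ E] [DecidableEq ι]
    (hv : Orthonormal ℝ v) (f : Module.End ℝ E) (M : Matrix ι ι ℝ)
    (h : ∀ j, f (v j) = ∑ i, M i j • v i) :
    toMatrixOrthonormal hv.orthonormalBasisSpan
      (f.restrict (apply_mem_span_range_of_apply_eq_sum f M h)) = M := by
  ext i j
  rw [toMatrixOrthonormal_apply_apply, coe_inner, coe_restrict_apply,
    hv.coe_orthonormalBasisSpan, hv.coe_orthonormalBasisSpan, h, hv.inner_right_fintype]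

end SpanOfOrthonormal

section HalfAngleFrame

variable {x y : E} {α β : ℝ}

/-- For unit vectors `x`, `y` with `⟪x, y⟫ = α ^ 2 - β ^ 2` and `α ^ 2 + β ^ 2 = 1`, that is,
`α` and `β` the cosine and sine of half the angle between them, this is the orthonormal frame
in which `x = (α, -β)` and `y = (α, β)`. -/
noncomputable def halfAngleFrame (x y : E) (α β : ℝ) : Fin 2 → E :=
  ![(2 * α)⁻¹ • (x + y), (2 * β)⁻¹ • (y - x)]

theorem orthonormal_halfAngleFrame (hx : ‖x‖ = 1) (hy : ‖y‖ = 1) (hα : 0 < α) (hβ : 0 < β)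
    (hαβ : α ^ 2 + β ^ 2 = 1) (hxy : ⟪x, y⟫ = α ^ 2 - β ^ 2) :
    Orthonormal ℝ (halfAngleFrame x y α β) := by
  have hxx : ⟪x, x⟫ = 1 := by rw [real_inner_self_eq_norm_sq, hx, one_pow]
  have hyy : ⟪y, y⟫ = 1 := by rw [real_inner_self_eq_norm_sq, hy, one_pow]
  have hyx : ⟪y, x⟫ = α ^ 2 - β ^ 2 := by rw [real_inner_comm, hxy]
  have h₀₀ : ⟪halfAngleFrame x y α β 0, halfAngleFrame x y α β 0⟫ = 1 := by
    simp only [halfAngleFrame, Matrix.cons_val_zero, real_inner_smul_left, real_inner_smul_right,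
      inner_add_left, inner_add_right, hxx, hyy, hxy, hyx]
    field_simp
    linear_combination -2 * hαβ
  have h₁₁ : ⟪halfAngleFrame x y α β 1, halfAngleFrame x y α β 1⟫ = 1 := by
    simp only [halfAngleFrame, Matrix.cons_val_one, Matrix.cons_val_zero, real_inner_smul_left,
      real_inner_smul_right, inner_sub_left, inner_sub_right, hxx, hyy, hxy, hyx]
    field_simp
    linear_combination -2 * hαβ
  have h₀₁ : ⟪halfAngleFrame x y α β 0, halfAngleFrame x y α β 1⟫ = 0 := by
    simp only [halfAngleFrame, Matrix.cons_val_one, Matrix.cons_val_zero, real_inner_smul_left,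
      real_inner_smul_right, inner_sub_right, inner_add_left, hxx, hyy, hxy, hyx]
    ring
  rw [orthonormal_iff_ite]
  intro i j
  fin_cases i <;> fin_cases j <;>
    simp [-inner_self_eq_norm_sq_to_K, h₀₀, h₁₁, h₀₁, real_inner_comm (halfAngleFrame x y α β 0)]

theorem sum_smul_halfAngleFrame_left (hα : α ≠ 0) (hβ : β ≠ 0) :
    ∑ i, ![α, -β] i • halfAngleFrame x y α β i = x := by
  simp only [Fin.sum_univ_two, halfAngleFrame, Matrix.cons_val_zero, Matrix.cons_val_one,
    smul_smul, neg_mul, show α * (2 * α)⁻¹ = 2⁻¹ by field_simp,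
    show β * (2 * β)⁻¹ = 2⁻¹ by field_simp]
  module

theorem sum_smul_halfAngleFrame_right (hα : α ≠ 0) (hβ : β ≠ 0) :
    ∑ i, ![α, β] i • halfAngleFrame x y α β i = y := by
  simp only [Fin.sum_univ_two, halfAngleFrame, Matrix.cons_val_zero, Matrix.cons_val_one,
    smul_smul, show α * (2 * α)⁻¹ = 2⁻¹ by field_simp, show β * (2 * β)⁻¹ = 2⁻¹ by field_simp]
  module

theorem apply_halfAngleFrame_left {p : Module.End ℝ E} (hα : 0 < α) (hβ : 0 < β)
    (hαβ : α ^ 2 + β ^ 2 = 1) (hxy : ⟪x, y⟫ = α ^ 2 - β ^ 2) (hpx : p x = x)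
    (hpy : p y = ⟪x, y⟫ • x) (j : Fin 2) : p (halfAngleFrame x y α β j) = ![α, -β] j • x := by
  fin_cases j
  · calc p (halfAngleFrame x y α β 0) = ((2 * α)⁻¹ * (1 + ⟪x, y⟫)) • x := by
          simp only [halfAngleFrame, Matrix.cons_val_zero, map_smul, map_add, hpx, hpy]; module
      _ = α • x := by rw [hxy]; congr 1; field_simp; linear_combination -hαβ
  · calc p (halfAngleFrame x y α β 1) = ((2 * β)⁻¹ * (⟪x, y⟫ - 1)) • x := by
          simp only [halfAngleFrame, Matrix.cons_val_one, Matrix.cons_val_zero, map_smul, map_sub,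
            hpx, hpy]; module
      _ = -β • x := by rw [hxy]; congr 1; field_simp; linear_combination hαβ

theorem apply_halfAngleFrame_right {q : Module.End ℝ E} (hα : 0 < α) (hβ : 0 < β)
    (hαβ : α ^ 2 + β ^ 2 = 1) (hxy : ⟪x, y⟫ = α ^ 2 - β ^ 2) (hqx : q x = ⟪x, y⟫ • y)
    (hqy : q y = y) (j : Fin 2) : q (halfAngleFrame x y α β j) = ![α, β] j • y := by
  fin_cases j
  · calc q (halfAngleFrame x y α β 0) = ((2 * α)⁻¹ * (⟪x, y⟫ + 1)) • y := by
          simp only [halfAngleFrame, Matrix.cons_val_zero, map_smul, map_add, hqx, hqy]; module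
      _ = α • y := by rw [hxy]; congr 1; field_simp; linear_combination -hαβ
  · calc q (halfAngleFrame x y α β 1) = ((2 * β)⁻¹ * (1 - ⟪x, y⟫)) • y := by
          simp only [halfAngleFrame, Matrix.cons_val_one, Matrix.cons_val_zero, map_smul, map_sub,
            hqx, hqy]; module
      _ = β • y := by rw [hxy]; congr 1; field_simp; linear_combination -hαβ

end HalfAngleFrame

section CSBasis

variable [FiniteDimensional ℝ E] {p q : Module.End ℝ E} {ι₁ ι₂ κ₁ κ₂ : Type*}
  [Fintype ι₁] [DecidableEq ι₁] [Fintype ι₂] [DecidableEq ι₂]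
  [Fintype κ₁] [DecidableEq κ₁] [Fintype κ₂] [DecidableEq κ₂]

def IsCSBasis (p q : Module.End ℝ E) (b : OrthonormalBasis (ι₁ ⊕ Fin 2 × ι₂) ℝ E) : Prop :=
  ∃ (a a' : ι₁ → ℝ) (cs : ι₂ → ℝ), (∀ i, a i = 0 ∨ a i = 1) ∧ (∀ i, a' i = 0 ∨ a' i = 1) ∧
    (∀ j, cs j ∈ Set.Ioo (-1 : ℝ) 1) ∧
    toMatrixOrthonormal b p = diagonalSumBlockDiagonal a (Pblock ∘ cs) ∧
    toMatrixOrthonormal b q = diagonalSumBlockDiagonal a' (Qblock ∘ cs)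

def HasCSBasis (p q : Module.End ℝ E) : Prop :=
  ∃ (k₁ k₂ : ℕ) (b : OrthonormalBasis (Fin k₁ ⊕ Fin 2 × Fin k₂) ℝ E), IsCSBasis p q b

def HasCSSummand (p q : Module.End ℝ E) : Prop :=
  ∃ (W : Submodule ℝ E) (_ : W ≠ ⊥) (hpW : ∀ x ∈ W, p x ∈ W) (hqW : ∀ x ∈ W, q x ∈ W),
    HasCSBasis (p.restrict hpW) (q.restrict hqW)

theorem IsCSBasis.reindex {b : OrthonormalBasis (ι₁ ⊕ Fin 2 × ι₂) ℝ E} (h : IsCSBasis p q b)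
    (e₁ : ι₁ ≃ κ₁) (e₂ : ι₂ ≃ κ₂) :
    IsCSBasis p q (b.reindex (e₁.sumCongr ((Equiv.refl _).prodCongr e₂))) := by
  obtain ⟨a, a', cs, ha, ha', hcs, hp, hq⟩ := h
  refine ⟨a ∘ e₁.symm, a' ∘ e₁.symm, cs ∘ e₂.symm, fun i => ha _, fun i => ha' _,
    fun j => hcs _, ?_, ?_⟩
  · rw [toMatrixOrthonormal_reindex, hp, reindex_diagonalSumBlockDiagonal]
    rfl
  · rw [toMatrixOrthonormal_reindex, hq, reindex_diagonalSumBlockDiagonal]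
    rfl

theorem IsCSBasis.hasCSBasis {b : OrthonormalBasis (ι₁ ⊕ Fin 2 × ι₂) ℝ E}
    (h : IsCSBasis p q b) : HasCSBasis p q :=
  ⟨_, _, _, h.reindex (Fintype.equivFin ι₁) (Fintype.equivFin ι₂)⟩

theorem hasCSBasis_of_subsingleton [Subsingleton E] (p q : Module.End ℝ E) : HasCSBasis p q :=
  ⟨0, 0, (Basis.empty E).toOrthonormalBasis ⟨isEmptyElim, fun i => isEmptyElim i⟩,
    isEmptyElim, isEmptyElim, isEmptyElim, isEmptyElim, isEmptyElim, isEmptyElim,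
    Subsingleton.elim _ _, Subsingleton.elim _ _⟩

theorem HasCSBasis.of_orthogonal {W : Submodule ℝ E} {hpW : ∀ x ∈ W, p x ∈ W}
    {hqW : ∀ x ∈ W, q x ∈ W} {hpW' : ∀ x ∈ Wᗮ, p x ∈ Wᗮ} {hqW' : ∀ x ∈ Wᗮ, q x ∈ Wᗮ}
    (h : HasCSBasis (p.restrict hpW) (q.restrict hqW))
    (h' : HasCSBasis (p.restrict hpW') (q.restrict hqW')) : HasCSBasis p q := by
  obtain ⟨k₁, k₂, b, a, a', cs, ha, ha', hcs, hp, hq⟩ := h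
  obtain ⟨m₁, m₂, c, d, d', ds, hd, hd', hds, hp', hq'⟩ := h'
  refine IsCSBasis.hasCSBasis (b := ((b.prod c).map W.orthogonalDecomposition.symm).reindex
    (sumBlocksEquiv _ _ _ _ _)) ⟨Sum.elim a d, Sum.elim a' d', Sum.elim cs ds,
      Sum.forall.2 ⟨ha, hd⟩, Sum.forall.2 ⟨ha', hd'⟩, Sum.forall.2 ⟨hcs, hds⟩, ?_, ?_⟩
  · rw [toMatrixOrthonormal_reindex,
      toMatrixOrthonormal_prod_orthogonalDecomposition _ _ _ hpW hpW', hp, hp',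
      reindex_fromBlocks_diagonalSumBlockDiagonal, Sum.comp_elim]
  · rw [toMatrixOrthonormal_reindex,
      toMatrixOrthonormal_prod_orthogonalDecomposition _ _ _ hqW hqW', hq, hq',
      reindex_fromBlocks_diagonalSumBlockDiagonal, Sum.comp_elim]

theorem hasCSSummand_of_orthonormal [Nonempty (ι₁ ⊕ Fin 2 × ι₂)] {v : ι₁ ⊕ Fin 2 × ι₂ → E}
    (hv : Orthonormal ℝ v) {a a' : ι₁ → ℝ} {cs : ι₂ → ℝ} (ha : ∀ i, a i = 0 ∨ a i = 1)
    (ha' : ∀ i, a' i = 0 ∨ a' i = 1) (hcs : ∀ j, cs j ∈ Set.Ioo (-1 : ℝ) 1)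
    (hpv : ∀ j, p (v j) = ∑ i, diagonalSumBlockDiagonal a (Pblock ∘ cs) i j • v i)
    (hqv : ∀ j, q (v j) = ∑ i, diagonalSumBlockDiagonal a' (Qblock ∘ cs) i j • v i) :
    HasCSSummand p q := by
  obtain ⟨j⟩ := ‹Nonempty (ι₁ ⊕ Fin 2 × ι₂)›
  exact ⟨span ℝ (Set.range v),
    (Submodule.ne_bot_iff _).mpr ⟨v j, subset_span (Set.mem_range_self j), hv.ne_zero j⟩, _, _,
    IsCSBasis.hasCSBasis (b := hv.orthonormalBasisSpan) ⟨a, a', cs, ha, ha', hcs,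
      hv.toMatrixOrthonormal_restrict_span p _ hpv, hv.toMatrixOrthonormal_restrict_span q _ hqv⟩⟩

theorem hasCSSummand_of_eigenvector {x : E} (hx : ‖x‖ = 1) {a a' : ℝ} (ha : a = 0 ∨ a = 1)
    (ha' : a' = 0 ∨ a' = 1) (hpx : p x = a • x) (hqx : q x = a' • x) : HasCSSummand p q := by
  refine hasCSSummand_of_orthonormal (ι₁ := Unit) (ι₂ := Empty) (v := fun _ => x)
    (a := fun _ => a) (a' := fun _ => a') (cs := isEmptyElim) ?_ (fun _ => ha) (fun _ => ha')
    isEmptyElim ?_ ?_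
  · refine ⟨fun _ => hx, ?_⟩
    rintro (⟨⟩ | ⟨_, ⟨⟩⟩) (⟨⟩ | ⟨_, ⟨⟩⟩) h
    exact absurd rfl h
  · rintro (⟨⟩ | ⟨_, ⟨⟩⟩)
    simp [diagonalSumBlockDiagonal, Fintype.sum_sum_type, hpx]
  · rintro (⟨⟩ | ⟨_, ⟨⟩⟩)
    simp [diagonalSumBlockDiagonal, Fintype.sum_sum_type, hqx]

theorem hasCSSummand_of_inner_mem_Ioo {x y : E} (hx : ‖x‖ = 1) (hy : ‖y‖ = 1)
    (hxy : ⟪x, y⟫ ∈ Set.Ioo 0 1) (hpx : p x = x) (hpy : p y = ⟪x, y⟫ • x)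
    (hqx : q x = ⟪x, y⟫ • y) (hqy : q y = y) : HasCSSummand p q := by
  set α := √((1 + ⟪x, y⟫) / 2)
  set β := √((1 - ⟪x, y⟫) / 2)
  have hα : 0 < α := Real.sqrt_pos.2 (by linarith [hxy.1])
  have hβ : 0 < β := Real.sqrt_pos.2 (by linarith [hxy.2])
  have hα2 : α ^ 2 = (1 + ⟪x, y⟫) / 2 := Real.sq_sqrt (by linarith [hxy.1])
  have hβ2 : β ^ 2 = (1 - ⟪x, y⟫) / 2 := Real.sq_sqrt (by linarith [hxy.2])
  have hαβ : α ^ 2 + β ^ 2 = 1 := by rw [hα2, hβ2]; ring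
  have hxy' : ⟪x, y⟫ = α ^ 2 - β ^ 2 := by rw [hα2, hβ2]; ring
  have hpF (j : Fin 2) : p (halfAngleFrame x y α β j) =
      ∑ i, Pblock (β ^ 2 - α ^ 2) i j • halfAngleFrame x y α β i := by
    rw [apply_halfAngleFrame_left hα hβ hαβ hxy' hpx hpy, Pblock_eq_vecMulVec hα.le hβ.le hαβ]
    conv_lhs => rw [← sum_smul_halfAngleFrame_left (x := x) (y := y) hα.ne' hβ.ne']
    simp only [Finset.smul_sum, smul_smul, vecMulVec_apply, mul_comm]
  have hqF (j : Fin 2) : q (halfAngleFrame x y α β j) =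
      ∑ i, Qblock (β ^ 2 - α ^ 2) i j • halfAngleFrame x y α β i := by
    rw [apply_halfAngleFrame_right hα hβ hαβ hxy' hqx hqy, Qblock_eq_vecMulVec hα.le hβ.le hαβ]
    conv_lhs => rw [← sum_smul_halfAngleFrame_right (x := x) (y := y) hα.ne' hβ.ne']
    simp only [Finset.smul_sum, smul_smul, vecMulVec_apply, mul_comm]
  have hF := orthonormal_halfAngleFrame hx hy hα hβ hαβ hxy'
  let e : Empty ⊕ Fin 2 × Unit ≃ Fin 2 := (Equiv.emptySum _ _).trans (Equiv.prodPUnit _)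
  refine hasCSSummand_of_orthonormal (hF.comp e e.injective) (a := isEmptyElim)
    (a' := isEmptyElim) (cs := fun _ => β ^ 2 - α ^ 2) isEmptyElim isEmptyElim
    (fun _ => ⟨by linarith [hxy.2], by linarith [hxy.1]⟩) ?_ ?_
  · rintro (e | ⟨j, ⟨⟩⟩)
    · exact e.elim
    simpa [e, diagonalSumBlockDiagonal, Fintype.sum_sum_type, Fintype.sum_prod_type,
      blockDiagonal_apply] using hpF j
  · rintro (e | ⟨j, ⟨⟩⟩)
    · exact e.elim
    simpa [e, diagonalSumBlockDiagonal, Fintype.sum_sum_type, Fintype.sum_prod_type,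
      blockDiagonal_apply] using hqF j

theorem exists_apply_eq_self_apply_comp_eq_smul (hp : p.IsSymmetricProjection)
    (hq : q.IsSymmetricProjection) (hp0 : p ≠ 0) :
    ∃ x : E, ‖x‖ = 1 ∧ p x = x ∧ ∃ μ : ℝ, p (q x) = μ • x := by
  have hrange : ∀ x ∈ range p, (p ∘ₗ q) x ∈ range p := fun x _ => mem_range_self p (q x)
  have hT : ((p ∘ₗ q).restrict hrange).IsSymmetric := by
    rintro ⟨x, hx⟩ ⟨y, hy⟩
    rw [hp.isIdempotentElem.mem_range_iff] at hx hy
    simp only [coe_inner, coe_restrict_apply]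
    calc ⟪p (q x), y⟫ = ⟪q x, p y⟫ := hp.isSymmetric _ _
      _ = ⟪p x, q y⟫ := by rw [hx, hy, hq.isSymmetric]
      _ = ⟪x, p (q y)⟫ := hp.isSymmetric _ _
  have : Nontrivial (range p) := nontrivial_iff_ne_bot.mpr (mt range_eq_bot.mp hp0)
  obtain ⟨⟨x, hx⟩, hx1, μ, hμ⟩ := hT.exists_norm_eq_one_apply_eq_smul
  exact ⟨x, hx1, hp.isIdempotentElem.mem_range_iff.mp hx, μ, congr_arg Subtype.val hμ⟩

theorem hasCSSummand_of_apply_comp_eq_smul (hp : p.IsSymmetricProjection)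
    (hq : q.IsSymmetricProjection) {x : E} (hx : ‖x‖ = 1) (hpx : p x = x) {μ : ℝ}
    (hμ : p (q x) = μ • x) (hqx₀ : q x ≠ 0) (hqx₁ : q x ≠ x) : HasCSSummand p q := by
  set r := ‖q x‖
  have hr : 0 < r := norm_pos_iff.mpr hqx₀
  have hqq : q (q x) = q x := congr($(hq.isIdempotentElem.eq) x)
  have hxqx : ⟪x, q x⟫ = r ^ 2 := by
    rw [← real_inner_self_eq_norm_sq, hq.isSymmetric, hqq]
  have hμr : μ = r ^ 2 := by
    have : ⟪x, p (q x)⟫ = ⟪x, q x⟫ := by rw [← hp.isSymmetric, hpx]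
    rwa [hμ, real_inner_smul_right, real_inner_self_eq_norm_sq, hx, hxqx, one_pow, mul_one] at this
  have hr1 : r < 1 := by
    have h : ‖x - q x‖ ^ 2 = 1 - r ^ 2 := by
      rw [norm_sub_sq_real, hx, hxqx]; ring
    have : 0 < ‖x - q x‖ := norm_pos_iff.mpr (sub_ne_zero.mpr hqx₁.symm)
    nlinarith
  have hy : ‖r⁻¹ • q x‖ = 1 := by
    rw [norm_smul, Real.norm_of_nonneg (inv_nonneg.2 hr.le), inv_mul_cancel₀ hr.ne']
  have hxy : ⟪x, r⁻¹ • q x⟫ = r := by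
    rw [real_inner_smul_right, hxqx]; field_simp
  refine hasCSSummand_of_inner_mem_Ioo hx hy (by rw [hxy]; exact ⟨hr, hr1⟩) hpx ?_ ?_ ?_
  · rw [hxy, map_smul, hμ, hμr, smul_smul]
    congr 1
    field_simp
  · rw [hxy, smul_smul, mul_inv_cancel₀ hr.ne', one_smul]
  · rw [map_smul, hqq]

theorem hasCSSummand [Nontrivial E] (hp : p.IsSymmetricProjection)
    (hq : q.IsSymmetricProjection) : HasCSSummand p q := by
  by_cases hp0 : p = 0
  · obtain ⟨x, hx, μ, hμ⟩ := hq.isSymmetric.exists_norm_eq_one_apply_eq_smul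
    have hx0 : x ≠ 0 := norm_ne_zero_iff.mp (by rw [hx]; exact one_ne_zero)
    exact hasCSSummand_of_eigenvector hx (.inl rfl)
      (hq.isIdempotentElem.eq_zero_or_eq_one_of_apply_eq_smul hx0 hμ) (by simp [hp0]) hμ
  obtain ⟨x, hx, hpx, μ, hμ⟩ := exists_apply_eq_self_apply_comp_eq_smul hp hq hp0
  by_cases hqx₀ : q x = 0
  · exact hasCSSummand_of_eigenvector hx (.inr rfl) (.inl rfl) (by rw [hpx, one_smul])
      (by rw [hqx₀, zero_smul])
  by_cases hqx₁ : q x = x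
  · exact hasCSSummand_of_eigenvector hx (.inr rfl) (.inr rfl) (by rw [hpx, one_smul])
      (by rw [hqx₁, one_smul])
  exact hasCSSummand_of_apply_comp_eq_smul hp hq hx hpx hμ hqx₀ hqx₁

theorem hasCSBasis (hp : p.IsSymmetricProjection) (hq : q.IsSymmetricProjection) :
    HasCSBasis p q := by
  induction h : finrank ℝ E using Nat.strong_induction_on generalizing E with
  | _ n ih =>
    rcases subsingleton_or_nontrivial E with _ | _
    · exact hasCSBasis_of_subsingleton p q
    obtain ⟨W, hW, hpW, hqW, hWcs⟩ := hasCSSummand hp hq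
    have hpW' : ∀ x ∈ Wᗮ, p x ∈ Wᗮ := hp.isSymmetric.orthogonalComplement_mem_invtSubmodule hpW
    have hqW' : ∀ x ∈ Wᗮ, q x ∈ Wᗮ := hq.isSymmetric.orthogonalComplement_mem_invtSubmodule hqW
    have hlt : finrank ℝ Wᗮ < n := by
      have := W.finrank_add_finrank_orthogonal
      have := Submodule.finrank_eq_zero.not.mpr hW
      omega
    exact hWcs.of_orthogonal (ih _ hlt (hp.restrict hpW') (hq.restrict hqW') rfl)

end CSBasis

/-- CS decomposition for a pair of real orthogonal projections. -/
theorem stmt_19 (d : ℕ) (P Q : Matrix (Fin d) (Fin d) ℝ)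
    (hPs : Pᵀ = P) (hPi : P * P = P) (hQs : Qᵀ = Q) (hQi : Q * Q = Q) :
    ∃ U ∈ Matrix.orthogonalGroup (Fin d) ℝ,
      ∃ (k₁ k₂ : ℕ) (e : (Fin k₁ ⊕ Fin 2 × Fin k₂) ≃ Fin d)
        (p q : Fin k₁ → ℝ) (cs : Fin k₂ → ℝ),
        (∀ i, p i = 0 ∨ p i = 1) ∧ (∀ i, q i = 0 ∨ q i = 1) ∧
        (∀ i, cs i ∈ Set.Ioo (-1 : ℝ) 1) ∧
        Uᵀ * P * U =
          Matrix.reindex e e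
            (Matrix.fromBlocks (Matrix.diagonal p) 0 0
              (Matrix.blockDiagonal fun i => Pblock (cs i))) ∧
        Uᵀ * Q * U =
          Matrix.reindex e e
            (Matrix.fromBlocks (Matrix.diagonal q) 0 0
              (Matrix.blockDiagonal fun i => Qblock (cs i))) := by
  obtain ⟨k₁, k₂, b, a, a', cs, ha, ha', hcs, hbP, hbQ⟩ :=
    hasCSBasis (isSymmetricProjection_toEuclideanLin hPs hPi)
      (isSymmetricProjection_toEuclideanLin hQs hQi)
  let std := EuclideanSpace.basisFun (Fin d) ℝ
  let e := b.toBasis.indexEquiv std.toBasis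
  refine ⟨_, std.toMatrix_orthonormalBasis_mem_orthogonal (b.reindex e), k₁, k₂, e, a, a', cs,
    ha, ha', hcs, ?_, ?_⟩
  · rw [transpose_mul_mul_eq_toMatrixOrthonormal, toMatrixOrthonormal_reindex, hbP]
    rfl
  · rw [transpose_mul_mul_eq_toMatrixOrthonormal, toMatrixOrthonormal_reindex, hbQ]
    rfl
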